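/- Let X_t and X_{t'} be jointly distributed finite random vectors with n components each, and let V_t be supervenient on X_t. Define Δ^(k) := max_{α⊆[n],|α|=k} ( I(V_t;X_{t'}^α) − Σ_{β⊆[n],|β|=k} I(X_t^β;X_{t'}^α) ). Assume: (whole-minus-sum) Syn^(k)(X;Y) ≥ I(X;Y) − Σ_{|β|=k} I(X^β;Y); and that the downward-causation index satisfies 𝒟^(k)(X_t;X_{t'}) ≥ Syn^(k)(X_t;X_{t'}^α) for every α ⊆ [n] with |α| = k. Then Δ^(k) ≤ 𝒟^(k)(X_t;X_{t'}); consequently Δ^(k) > 0 is a sufficient condition for the system to exhibit downward causation of order k (i.e. it implies 𝒟^(k)(X_t;X_{t'}) > 0). -/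

import Mathlib

/-!
Framework: finite probability.  A finite sample space `Ω` carries a probability
mass function `μ : Ω → ℝ`; random variables are functions on `Ω`.
-/

noncomputable section

open scoped BigOperators

attribute [local instance] Classical.propDecidable

variable {Ω : Type} [Fintype Ω]

/-- The probability that the random variable `f` takes the value `a`, under the pmf `μ`. -/
def prEq (μ : Ω → ℝ) {A : Type} (f : Ω → A) (a : A) : ℝ :=
  ∑ ω, if f ω = a then μ ω else 0

/-- `μ` is a probability mass function on the finite sample space `Ω`. -/
def IsPMF (μ : Ω → ℝ) : Prop :=
  (∀ ω, 0 ≤ μ ω) ∧ ∑ ω, μ ω = 1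

/-- The Markov chain `f − g − h`: `f` and `h` are conditionally independent given `g`. -/
def MarkovChain (μ : Ω → ℝ) {A B C : Type} (f : Ω → A) (g : Ω → B) (h : Ω → C) : Prop :=
  ∀ a b c,
    prEq μ (fun ω => (f ω, g ω, h ω)) (a, b, c) * prEq μ g b =
      prEq μ (fun ω => (f ω, g ω)) (a, b) * prEq μ (fun ω => (g ω, h ω)) (b, c)

/-- Statistical independence of two random variables. -/
def IndepRV (μ : Ω → ℝ) {A B : Type} (f : Ω → A) (g : Ω → B) : Prop :=
  ∀ a b, prEq μ (fun ω => (f ω, g ω)) (a, b) = prEq μ f a * prEq μ g b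

/-- Shannon mutual information `I(f;g)`. -/
def mutInfo (μ : Ω → ℝ) {A B : Type} (f : Ω → A) (g : Ω → B) : ℝ :=
  ∑ a ∈ Finset.univ.image f, ∑ b ∈ Finset.univ.image g,
    prEq μ (fun ω => (f ω, g ω)) (a, b) *
      Real.log (prEq μ (fun ω => (f ω, g ω)) (a, b) / (prEq μ f a * prEq μ g b))

/-- Conditional mutual information `I(f;g|h)`. -/
def condMutInfo (μ : Ω → ℝ) {A B C : Type} (f : Ω → A) (g : Ω → B) (h : Ω → C) : ℝ :=
  ∑ a ∈ Finset.univ.image f, ∑ b ∈ Finset.univ.image g, ∑ c ∈ Finset.univ.image h,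
    prEq μ (fun ω => (f ω, g ω, h ω)) (a, b, c) *
      Real.log ((prEq μ h c * prEq μ (fun ω => (f ω, g ω, h ω)) (a, b, c)) /
        (prEq μ (fun ω => (f ω, h ω)) (a, c) * prEq μ (fun ω => (g ω, h ω)) (b, c)))

/-- Conditional entropy `H(f|g)`. -/
def condEntropyRV (μ : Ω → ℝ) {A B : Type} (f : Ω → A) (g : Ω → B) : ℝ :=
  -∑ a ∈ Finset.univ.image f, ∑ b ∈ Finset.univ.image g,
    prEq μ (fun ω => (f ω, g ω)) (a, b) *
      Real.log (prEq μ (fun ω => (f ω, g ω)) (a, b) / prEq μ g b)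

/-- The sub-vector `X^α` of the random vector `X`, for a set of indices `α ⊆ [n]`. -/
def subvec {n : ℕ} {𝓧 : Fin n → Type} (X : Ω → ∀ i, 𝓧 i) (α : Finset (Fin n)) :
    Ω → ∀ i : α, 𝓧 i :=
  fun ω i => X ω i

/-- The collection of all subsets of `[n]` of cardinality `k`. -/
def kSets (n k : ℕ) : Finset (Finset (Fin n)) :=
  Finset.univ.filter fun α => α.card = k

/-!
Supervenience `V − X_t − X_{t'}` survives replacing `X_{t'}` by any sub-vector `X_{t'}^α`, so the
data-processing inequality gives `I(V; X_{t'}^α) ≤ I(X_t; X_{t'}^α)`. By whole-minus-sum each term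
of the maximum defining `Δ⁽ᵏ⁾` is then at most `Syn⁽ᵏ⁾(X_t; X_{t'}^α) ≤ 𝒟⁽ᵏ⁾`.

The data-processing inequality is Gibbs' argument: writing both mutual informations as
expectations of pointwise mutual informations, their difference is the expectation of `log R`
for a likelihood ratio `R`, and `log R ≤ R - 1` with `𝔼 R ≤ 1` by the Markov property.
-/

section Marginals

variable {A B C : Type} (μ : Ω → ℝ)

lemma prEq_nonneg (hμ : ∀ ω, 0 ≤ μ ω) (f : Ω → A) (a : A) : 0 ≤ prEq μ f a :=
  Finset.sum_nonneg fun ω _ => by split_ifs <;> simp [hμ ω]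

lemma prEq_le_prEq_of_imp (hμ : ∀ ω, 0 ≤ μ ω) {f : Ω → A} {g : Ω → B} {a : A} {b : B}
    (hfg : ∀ ω, f ω = a → g ω = b) : prEq μ f a ≤ prEq μ g b :=
  Finset.sum_le_sum fun ω _ => by
    by_cases ha : f ω = a
    · simp [ha, hfg ω ha]
    · simp only [ha, if_false]; split_ifs <;> simp [hμ ω]

lemma prEq_congr {f : Ω → A} {g : Ω → B} {a : A} {b : B} (hfg : ∀ ω, f ω = a ↔ g ω = b) :
    prEq μ f a = prEq μ g b :=
  Finset.sum_congr rfl fun ω _ => by simp only [hfg ω]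

lemma prEq_apply_pos (hμ : ∀ ω, 0 ≤ μ ω) (f : Ω → A) {ω : Ω} (hω : 0 < μ ω) :
    0 < prEq μ f (f ω) :=
  hω.trans_le <| by
    unfold prEq
    simpa using Finset.single_le_sum (f := fun ω' => if f ω' = f ω then μ ω' else 0)
      (fun ω' _ => by split_ifs <;> simp [hμ ω']) (Finset.mem_univ ω)

lemma sum_prEq_mul_of_image_subset (f : Ω → A) (L : A → ℝ) {s : Finset A}
    (hs : Finset.univ.image f ⊆ s) :
    ∑ a ∈ s, prEq μ f a * L a = ∑ ω, μ ω * L (f ω) := by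
  simp only [prEq, Finset.sum_mul, ite_mul, zero_mul]
  rw [Finset.sum_comm]
  refine Finset.sum_congr rfl fun ω _ => ?_
  rw [Finset.sum_ite_eq, if_pos (hs (Finset.mem_image_of_mem f (Finset.mem_univ ω)))]

lemma sum_image_prEq (hμ : ∑ ω, μ ω = 1) (f : Ω → A) :
    ∑ a ∈ Finset.univ.image f, prEq μ f a = 1 := by
  simpa [hμ] using sum_prEq_mul_of_image_subset μ f (fun _ => 1) subset_rfl

lemma sum_image_prEq_pair (f : Ω → A) (g : Ω → B) (a : A) :
    ∑ b ∈ Finset.univ.image g, prEq μ (fun ω => (f ω, g ω)) (a, b) = prEq μ f a := by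
  simp only [prEq, Prod.mk.injEq]
  rw [Finset.sum_comm]
  refine Finset.sum_congr rfl fun ω _ => ?_
  by_cases ha : f ω = a
  · simp [ha, eq_comm (a := g ω)]
  · simp [ha]

lemma prEq_pair_comp_eq_sum (f : Ω → A) (h : Ω → C) {C' : Type} (φ : C → C') (a : A) (c : C') :
    prEq μ (fun ω => (f ω, φ (h ω))) (a, c) =
      ∑ c' ∈ (Finset.univ.image h).filter (φ · = c), prEq μ (fun ω => (f ω, h ω)) (a, c') := by
  simp only [prEq, Prod.mk.injEq]
  rw [Finset.sum_comm]
  refine Finset.sum_congr rfl fun ω _ => ?_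
  by_cases ha : f ω = a
  · simp [ha, Finset.sum_ite_eq]
  · simp [ha]

end Marginals

section PointwiseMutualInformation

variable {A B C : Type} (μ : Ω → ℝ)

def pmi (f : Ω → A) (g : Ω → B) (ω : Ω) : ℝ :=
  Real.log (prEq μ (fun ω => (f ω, g ω)) (f ω, g ω) / (prEq μ f (f ω) * prEq μ g (g ω)))

lemma mutInfo_eq_sum_pmi (f : Ω → A) (g : Ω → B) :
    mutInfo μ f g = ∑ ω, μ ω * pmi μ f g ω := by
  rw [mutInfo, ← Finset.sum_product' (f := fun a b => prEq μ (fun ω => (f ω, g ω)) (a, b) *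
      Real.log (prEq μ (fun ω => (f ω, g ω)) (a, b) / (prEq μ f a * prEq μ g b)))]
  exact sum_prEq_mul_of_image_subset μ (fun ω => (f ω, g ω))
    (fun x => Real.log (prEq μ (fun ω => (f ω, g ω)) x / (prEq μ f x.1 * prEq μ g x.2)))
    (by intro x; simp only [Finset.mem_image, Finset.mem_product]; aesop)

def pmiRatio (f : Ω → A) (g : Ω → B) (h : Ω → C) (x : A × B × C) : ℝ :=
  prEq μ (fun ω => (f ω, h ω)) (x.1, x.2.2) * prEq μ g x.2.1 /
    (prEq μ f x.1 * prEq μ (fun ω => (g ω, h ω)) (x.2.1, x.2.2))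

variable {μ} (hμ : ∀ ω, 0 ≤ μ ω) (f : Ω → A) (g : Ω → B) (h : Ω → C) {ω : Ω} (hω : 0 < μ ω)
include hμ hω

lemma pmiRatio_pos : 0 < pmiRatio μ f g h (f ω, g ω, h ω) := by
  have := prEq_apply_pos μ hμ (fun ω => (f ω, h ω)) hω
  have := prEq_apply_pos μ hμ (fun ω => (g ω, h ω)) hω
  have := prEq_apply_pos μ hμ f hω
  have := prEq_apply_pos μ hμ g hω
  unfold pmiRatio
  positivity

lemma pmi_sub_pmi_eq_log_pmiRatio :
    pmi μ f h ω - pmi μ g h ω = Real.log (pmiRatio μ f g h (f ω, g ω, h ω)) := by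
  have := prEq_apply_pos μ hμ (fun ω => (f ω, h ω)) hω
  have := prEq_apply_pos μ hμ (fun ω => (g ω, h ω)) hω
  have := prEq_apply_pos μ hμ f hω
  have := prEq_apply_pos μ hμ g hω
  have := prEq_apply_pos μ hμ h hω
  unfold pmi pmiRatio
  rw [← Real.log_div (by positivity) (by positivity)]
  congr 1
  field_simp

end PointwiseMutualInformation

lemma sum_sum_sum_prEq_mul_prEq_div {A B C : Type} {μ : Ω → ℝ} (hμ : ∑ ω, μ ω = 1)
    (f : Ω → A) (g : Ω → B) (h : Ω → C) :
    ∑ a ∈ Finset.univ.image f, ∑ b ∈ Finset.univ.image g, ∑ c ∈ Finset.univ.image h,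
      prEq μ (fun ω => (f ω, g ω)) (a, b) * prEq μ (fun ω => (f ω, h ω)) (a, c) / prEq μ f a
      = 1 := by
  calc _ = ∑ a ∈ Finset.univ.image f, prEq μ f a * prEq μ f a / prEq μ f a := by
        simp_rw [← Finset.sum_div, ← Finset.mul_sum, ← Finset.sum_mul, sum_image_prEq_pair]
    _ = 1 := by simp_rw [mul_self_div_self]; exact sum_image_prEq μ hμ f

namespace MarkovChain

variable {A B C : Type} {μ : Ω → ℝ} {f : Ω → A} {g : Ω → B} {h : Ω → C}

theorem comp_right {C' : Type} (φ : C → C') (hM : MarkovChain μ f g h) :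
    MarkovChain μ f g (fun ω => φ (h ω)) := by
  intro a b c
  rw [prEq_congr μ (g := fun ω => ((f ω, g ω), φ (h ω))) (b := ((a, b), c)) (by simp [and_assoc]),
    prEq_pair_comp_eq_sum, prEq_pair_comp_eq_sum μ g h φ, Finset.sum_mul, Finset.mul_sum]
  refine Finset.sum_congr rfl fun c' _ => ?_
  rw [prEq_congr μ (g := fun ω => (f ω, g ω, h ω)) (b := (a, b, c')) (by simp [and_assoc])]
  exact hM a b c'

theorem prEq_mul_pmiRatio_le (hμ : ∀ ω, 0 ≤ μ ω) (hM : MarkovChain μ f g h) (a : A) (b : B)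
    (c : C) :
    prEq μ (fun ω => (f ω, g ω, h ω)) (a, b, c) * pmiRatio μ f g h (a, b, c) ≤
      prEq μ (fun ω => (f ω, g ω)) (a, b) * prEq μ (fun ω => (f ω, h ω)) (a, c) / prEq μ f a := by
  have hfg := prEq_nonneg μ hμ (fun ω => (f ω, g ω)) (a, b)
  have hfh := prEq_nonneg μ hμ (fun ω => (f ω, h ω)) (a, c)
  rcases (prEq_nonneg μ hμ (fun ω => (f ω, g ω, h ω)) (a, b, c)).eq_or_lt with h0 | hpos
  · rw [← h0, zero_mul]
    exact div_nonneg (mul_nonneg hfg hfh) (prEq_nonneg μ hμ f a)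
  have below {D : Type} {F : Ω → D} {d : D} (hF : ∀ ω, (f ω, g ω, h ω) = (a, b, c) → F ω = d) :
      0 < prEq μ F d := hpos.trans_le (prEq_le_prEq_of_imp μ hμ hF)
  have hgh : 0 < prEq μ (fun ω => (g ω, h ω)) (b, c) := below (by simp +contextual)
  have hg : 0 < prEq μ g b := below (by simp +contextual)
  have hf : 0 < prEq μ f a := below (by simp +contextual)
  refine le_of_eq ?_
  unfold pmiRatio
  field_simp
  linear_combination prEq μ (fun ω => (f ω, h ω)) (a, c) * hM a b c

theorem sum_mul_pmiRatio_le_one (hμ : IsPMF μ) (hM : MarkovChain μ f g h) :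
    ∑ ω, μ ω * pmiRatio μ f g h (f ω, g ω, h ω) ≤ 1 := by
  rw [← sum_prEq_mul_of_image_subset μ (fun ω => (f ω, g ω, h ω)) _
    (s := Finset.univ.image f ×ˢ Finset.univ.image g ×ˢ Finset.univ.image h)
    (by intro x; simp only [Finset.mem_image, Finset.mem_product]; aesop)]
  calc _ ≤ ∑ x ∈ Finset.univ.image f ×ˢ Finset.univ.image g ×ˢ Finset.univ.image h,
        prEq μ (fun ω => (f ω, g ω)) (x.1, x.2.1) * prEq μ (fun ω => (f ω, h ω)) (x.1, x.2.2) /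
          prEq μ f x.1 :=
        Finset.sum_le_sum fun x _ => hM.prEq_mul_pmiRatio_le hμ.1 x.1 x.2.1 x.2.2
    _ = 1 := by
        rw [Finset.sum_product]
        simp_rw [Finset.sum_product]
        exact sum_sum_sum_prEq_mul_prEq_div hμ.2 f g h

theorem mutInfo_le (hμ : IsPMF μ) (hM : MarkovChain μ f g h) :
    mutInfo μ f h ≤ mutInfo μ g h := by
  have gibbs : ∀ ω, μ ω * pmi μ f h ω ≤
      μ ω * pmi μ g h ω + μ ω * (pmiRatio μ f g h (f ω, g ω, h ω) - 1) := fun ω => by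
    rcases (hμ.1 ω).eq_or_lt with h0 | hω
    · simp [← h0]
    have := mul_le_mul_of_nonneg_left
      (Real.log_le_sub_one_of_pos (pmiRatio_pos hμ.1 f g h hω)) hω.le
    rw [← pmi_sub_pmi_eq_log_pmiRatio hμ.1 f g h hω] at this
    linarith
  calc mutInfo μ f h ≤ ∑ ω, (μ ω * pmi μ g h ω +
        μ ω * (pmiRatio μ f g h (f ω, g ω, h ω) - 1)) := by
        rw [mutInfo_eq_sum_pmi]; exact Finset.sum_le_sum fun ω _ => gibbs ω
    _ = mutInfo μ g h + (∑ ω, μ ω * pmiRatio μ f g h (f ω, g ω, h ω) - 1) := by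
        simp only [Finset.sum_add_distrib, mul_sub, Finset.sum_sub_distrib, mul_one, hμ.2,
          mutInfo_eq_sum_pmi]
    _ ≤ mutInfo μ g h := by linarith [hM.sum_mul_pmiRatio_le_one hμ]

end MarkovChain

theorem delta_positive_sufficient_for_downward_causation_general
    {Ω : Type} [Fintype Ω] (μ : Ω → ℝ) (hμ : IsPMF μ)
    {n : ℕ} {𝓧 𝓨 : Fin n → Type}
    (X : Ω → ∀ i, 𝓧 i) (X' : Ω → ∀ i, 𝓨 i)
    {𝓥 : Type} (V : Ω → 𝓥)
    (k : ℕ) (hne : (kSets n k).Nonempty)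
    (hsup : MarkovChain μ V X X')
    (Syn : (T : Type) → (Ω → T) → ℝ)
    (D : ℝ)
    (hwms : ∀ (T : Type) (Y : Ω → T),
      mutInfo μ X Y - ∑ β ∈ kSets n k, mutInfo μ (subvec X β) Y ≤ Syn T Y)
    (hD_lb : ∀ α ∈ kSets n k, Syn (∀ i : α, 𝓨 i) (subvec X' α) ≤ D) :
    (kSets n k).sup' hne (fun α =>
        mutInfo μ V (subvec X' α)
          - ∑ β ∈ kSets n k, mutInfo μ (subvec X β) (subvec X' α)) ≤ D ∧
      (0 < (kSets n k).sup' hne (fun α =>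
          mutInfo μ V (subvec X' α)
            - ∑ β ∈ kSets n k, mutInfo μ (subvec X β) (subvec X' α)) →
        0 < D) := by
  have hΔ : (kSets n k).sup' hne (fun α =>
      mutInfo μ V (subvec X' α)
        - ∑ β ∈ kSets n k, mutInfo μ (subvec X β) (subvec X' α)) ≤ D := by
    refine Finset.sup'_le hne _ fun α hα => ?_
    have hdpi : mutInfo μ V (subvec X' α) ≤ mutInfo μ X (subvec X' α) :=
      (hsup.comp_right fun (x : ∀ i, 𝓨 i) (i : α) => x i).mutInfo_le hμ
    linarith [hwms _ (subvec X' α), hD_lb α hα]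
  exact ⟨hΔ, fun hpos => hpos.trans_le hΔ⟩

theorem delta_positive_sufficient_for_downward_causation
    {Ω : Type} [Fintype Ω] (μ : Ω → ℝ) (hμ : IsPMF μ)
    {n : ℕ} {𝓧 𝓨 : Fin n → Type} [∀ i, Fintype (𝓧 i)] [∀ i, Fintype (𝓨 i)]
    (X : Ω → ∀ i, 𝓧 i) (X' : Ω → ∀ i, 𝓨 i)
    {𝓥 : Type} [Fintype 𝓥] (V : Ω → 𝓥)
    (k : ℕ) (hne : (kSets n k).Nonempty)
    (hsup : MarkovChain μ V X X')
    (Syn : (T : Type) → (Ω → T) → ℝ)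
    (D : ℝ)
    (hwms : ∀ (T : Type) (Y : Ω → T),
      mutInfo μ X Y - ∑ β ∈ kSets n k, mutInfo μ (subvec X β) Y ≤ Syn T Y)
    (hD_lb : ∀ α ∈ kSets n k, Syn (∀ i : α, 𝓨 i) (subvec X' α) ≤ D) :
    (kSets n k).sup' hne (fun α =>
        mutInfo μ V (subvec X' α)
          - ∑ β ∈ kSets n k, mutInfo μ (subvec X β) (subvec X' α)) ≤ D ∧
      (0 < (kSets n k).sup' hne (fun α =>
          mutInfo μ V (subvec X' α)
            - ∑ β ∈ kSets n k, mutInfo μ (subvec X β) (subvec X' α)) →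
        0 < D) :=
  delta_positive_sufficient_for_downward_causation_general μ hμ X X' V k hne hsup Syn D hwms hD_lb
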